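/- Let k ≥ 2 be an integer, m a nonnegative integer, and define F_k(m; x) = ((2m + k − 1)! / (m! · (2m + k − 1)! · (k/2)_m)) · (k/(2(k − 1)))^m · (e₂(x))^m e^{−e₁(x)} for x ∈ ℝ^k, i.e., F_k(m; x) = (1/(m! · (k/2)_m)) · (k/(2(k − 1)))^m · (e₂(x))^m e^{−e₁(x)}. For 1 ≤ i ≤ k write x̂_i for the (k−1)-tuple obtained from x by deleting x_i, and define R(u; v₁, …, v_{k−1}) = (((k − 1)(m + 1) + e₁(v₁, …, v_{k−1})) u + e₂(v₁, …, v_{k−1})) / ((k − 1)(m + 1)(2m + k)). Then for every x ∈ (0, ∞)^k, the identity F_k(m + 1; x) − F_k(m; x) = − Σ_{i=1}^k ∂/∂x_i [ R(x_i; x̂_i) · F_k(m; x) ] holds, where ∂/∂x_i denotes the partial derivative with respect to the i-th coordinate. -/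

import Mathlib

/-!
Write `s = e₁(x)`, `q = e₂(x)` and `F_k(m; x) = c_m q^m e^{-s}`. Along the `i`-th coordinate,
`e₁` and `e₂` are affine with slopes `1` and `e₁(x̂ᵢ)`, so each `∂ᵢ[R F_k(m; ·)]` is an explicit
multiple of `c_m e^{-s} / D`, `D = (k-1)(m+1)(2m+k)`, that is quadratic in `xᵢ`. Summing over `i`
with `∑ (s - xᵢ) = (k-1) s` and `∑ xᵢ (s - xᵢ) = 2q`, all terms in `s` cancel and the sum is
`F_k(m; x) (1 - k q / D)`; since `c_{m+1} = (k / D) c_m`, this is `F_k(m; x) - F_k(m+1; x)`.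
-/

open MeasureTheory Finset

/-- `e₁(x) = ∑ᵢ xᵢ` -/
noncomputable def e1 {k : ℕ} (x : Fin k → ℝ) : ℝ := ∑ i, x i

/-- `e₂(x) = ∑_{i<j} xᵢ xⱼ` -/
noncomputable def e2 {k : ℕ} (x : Fin k → ℝ) : ℝ := ∑ i, ∑ j ∈ Finset.Ioi i, x i * x j

/-- Pochhammer symbol `(y)ₘ = ∏_{i=0}^{m-1} (y + i)` -/
noncomputable def poch (y : ℝ) (m : ℕ) : ℝ := ∏ i ∈ Finset.range m, (y + i)

/-- The WZ integrand `F_k(m; x) = F_k(m, 0; x)` of the paper. -/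
noncomputable def F (k m : ℕ) (x : Fin k → ℝ) : ℝ :=
  ((2 * m + k - 1).factorial : ℝ) /
      ((m.factorial : ℝ) * ((2 * m + k - 1).factorial : ℝ) * poch ((k : ℝ) / 2) m) *
    ((k : ℝ) / (2 * ((k : ℝ) - 1))) ^ m * e2 x ^ m * Real.exp (-(e1 x))

lemma sum_univ_update_eq_sub_add {ι M : Type*} [Fintype ι] [DecidableEq ι] [AddCommGroup M]
    (f : ι → M) (i : ι) (b : M) :
    ∑ j, Function.update f i b j = ∑ j, f j - f i + b := by
  rw [Finset.sum_update_of_mem (Finset.mem_univ i), ← Finset.erase_eq,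
    Finset.sum_erase_eq_sub (Finset.mem_univ i)]
  abel

section SymmetricFunctions

variable {k : ℕ}

lemma sum_mul_e1_sub (x : Fin k → ℝ) : ∑ i, x i * (e1 x - x i) = 2 * e2 x := by
  have hoff : 2 * e2 x = ∑ i, ∑ j ∈ ({i}ᶜ : Finset (Fin k)), x j * x i := by
    rw [← Finset.sum_sum_Ioi_add_eq_sum_sum_off_diag, e2, Finset.mul_sum]
    refine Finset.sum_congr rfl fun i _ => ?_
    rw [Finset.mul_sum]
    exact Finset.sum_congr rfl fun j _ => by ring
  rw [hoff]
  refine Finset.sum_congr rfl fun i _ => ?_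
  rw [e1, Fintype.sum_eq_add_sum_compl i, ← Finset.sum_mul]
  ring

lemma two_mul_e2 (x : Fin k → ℝ) : 2 * e2 x = e1 x ^ 2 - ∑ i, x i ^ 2 := by
  rw [← sum_mul_e1_sub]
  simp only [mul_sub, Finset.sum_sub_distrib, ← Finset.sum_mul, ← pow_two]
  rw [← e1]
  ring

lemma e1_update (x : Fin k → ℝ) (i : Fin k) (t : ℝ) :
    e1 (Function.update x i t) = e1 x - x i + t :=
  sum_univ_update_eq_sub_add x i t

lemma e2_update (x : Fin k → ℝ) (i : Fin k) (t : ℝ) :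
    e2 (Function.update x i t) = e2 x - x i * (e1 x - x i) + t * (e1 x - x i) := by
  have hsq : ∑ j, Function.update x i t j ^ 2 = ∑ j, x j ^ 2 - x i ^ 2 + t ^ 2 := by
    rw [← sum_univ_update_eq_sub_add (fun j => x j ^ 2)]
    exact Finset.sum_congr rfl fun j _ => Function.apply_update (fun _ y => y ^ 2) x i t j
  have h := two_mul_e2 (Function.update x i t)
  rw [e1_update, hsq] at h
  linear_combination h / 2 - two_mul_e2 x / 2

end SymmetricFunctions

lemma poch_pos {y : ℝ} (hy : 0 < y) (m : ℕ) : 0 < poch y m :=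
  Finset.prod_pos fun i _ => by positivity

lemma poch_succ (y : ℝ) (m : ℕ) : poch y (m + 1) = poch y m * (y + m) :=
  Finset.prod_range_succ _ m

noncomputable def Fcoeff (k m : ℕ) : ℝ :=
  ((k : ℝ) / (2 * ((k : ℝ) - 1))) ^ m / ((m.factorial : ℝ) * poch ((k : ℝ) / 2) m)

lemma F_eq (k m : ℕ) (x : Fin k → ℝ) :
    F k m x = Fcoeff k m * e2 x ^ m * Real.exp (-(e1 x)) := by
  have hfac : ((2 * m + k - 1).factorial : ℝ) ≠ 0 := by positivity
  rw [F, Fcoeff, mul_right_comm (m.factorial : ℝ), ← div_div, div_right_comm, div_self hfac,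
    one_div]
  ring

lemma Fcoeff_succ {k : ℕ} (hk : 2 ≤ k) (m : ℕ) :
    Fcoeff k (m + 1) =
      k / (((k : ℝ) - 1) * ((m : ℝ) + 1) * (2 * (m : ℝ) + k)) * Fcoeff k m := by
  have hk' : (2 : ℝ) ≤ k := by exact_mod_cast hk
  have hk1 : (k : ℝ) - 1 ≠ 0 := by linarith
  have hpoch : poch ((k : ℝ) / 2) m ≠ 0 := (poch_pos (by linarith) m).ne'
  have hkm : (k : ℝ) / 2 + m ≠ 0 := by positivity
  rw [Fcoeff, Fcoeff, poch_succ, Nat.factorial_succ, pow_succ]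
  generalize ((k : ℝ) / (2 * ((k : ℝ) - 1))) ^ m = r
  push_cast
  field_simp
  ring

lemma F_update (k m : ℕ) (x : Fin k → ℝ) (i : Fin k) (t : ℝ) :
    F k m (Function.update x i t) = Fcoeff k m *
      (e2 x - x i * (e1 x - x i) + t * (e1 x - x i)) ^ m * Real.exp (-(e1 x - x i + t)) := by
  rw [F_eq, e1_update, e2_update]

lemma hasDerivAt_affine_mul_pow_mul_exp (a b p r s u : ℝ) (m : ℕ) :
    HasDerivAt (fun t => (a * t + b) * ((p + t * r) ^ m * Real.exp (-(s + t))))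
      ((a * (p + u * r) ^ m + (a * u + b) * (m * (p + u * r) ^ (m - 1) * r - (p + u * r) ^ m)) *
        Real.exp (-(s + u))) u := by
  have haff : HasDerivAt (fun t => a * t + b) a u := by
    simpa using ((hasDerivAt_id u).const_mul a).add_const b
  have hpow : HasDerivAt (fun t => (p + t * r) ^ m) (m * (p + u * r) ^ (m - 1) * r) u := by
    simpa using (((hasDerivAt_id u).mul_const r).const_add p).fun_pow m
  have hexp : HasDerivAt (fun t => Real.exp (-(s + t))) (-Real.exp (-(s + u))) u := by
    simpa using ((hasDerivAt_id u).const_add s).fun_neg.exp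
  exact (haff.fun_mul (hpow.fun_mul hexp)).congr_deriv (by ring)

lemma deriv_affine_mul_F_update (k m : ℕ) (A D : ℝ) (x : Fin k → ℝ) (i : Fin k) :
    deriv (fun t => ((A + (e1 x - x i)) * t + (e2 x - x i * (e1 x - x i))) / D *
        F k m (Function.update x i t)) (x i) =
      Fcoeff k m / D * ((A + (e1 x - x i)) * e2 x ^ m + (A * x i + e2 x) *
        (m * e2 x ^ (m - 1) * (e1 x - x i) - e2 x ^ m)) * Real.exp (-(e1 x)) := by
  set s := e1 x - x i
  set q := e2 x - x i * s
  have hfun : (fun t => ((A + s) * t + q) / D * F k m (Function.update x i t)) =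
      fun t => Fcoeff k m / D * (((A + s) * t + q) * ((q + t * s) ^ m * Real.exp (-(s + t)))) :=
    funext fun t => by rw [F_update]; ring
  have hq : q + x i * s = e2 x := by ring
  have hs : s + x i = e1 x := by ring
  rw [hfun, ((hasDerivAt_affine_mul_pow_mul_exp (A + s) q q s s (x i) m).const_mul _).deriv,
    hq, hs]
  ring

lemma natCast_mul_pow_pred_mul {R : Type*} [CommSemiring R] (m : ℕ) (a : R) :
    (m : R) * a ^ (m - 1) * a = m * a ^ m := by
  cases m with
  | zero => simp
  | succ n => rw [Nat.add_sub_cancel, mul_assoc, ← pow_succ]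

lemma sum_wz_numerator {k : ℕ} (m : ℕ) (x : Fin k → ℝ) :
    ∑ i, ((((k : ℝ) - 1) * ((m : ℝ) + 1) + (e1 x - x i)) * e2 x ^ m +
        (((k : ℝ) - 1) * ((m : ℝ) + 1) * x i + e2 x) *
          (m * e2 x ^ (m - 1) * (e1 x - x i) - e2 x ^ m)) =
      ((k : ℝ) - 1) * ((m : ℝ) + 1) * (2 * (m : ℝ) + k) * e2 x ^ m - k * e2 x ^ (m + 1) := by
  set A := ((k : ℝ) - 1) * ((m : ℝ) + 1)
  set M := (m : ℝ) * e2 x ^ (m - 1)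
  have hterm : ∀ i,
      (A + (e1 x - x i)) * e2 x ^ m + (A * x i + e2 x) * (M * (e1 x - x i) - e2 x ^ m) =
        (A * e2 x ^ m - e2 x ^ (m + 1)) + (e2 x ^ m + M * e2 x) * (e1 x - x i) +
          A * M * (x i * (e1 x - x i)) - A * e2 x ^ m * x i := fun i => by ring
  simp only [hterm, Finset.sum_sub_distrib, Finset.sum_add_distrib, ← Finset.mul_sum,
    Finset.sum_const, Finset.card_univ, Fintype.card_fin, nsmul_eq_mul]
  rw [sum_mul_e1_sub, ← e1]
  linear_combination (((k : ℝ) - 1) * e1 x + 2 * A) * natCast_mul_pow_pred_mul m (e2 x)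

/-- `x̂ᵢ` is encoded through `e₁(x̂ᵢ) = e₁(x) - xᵢ` and `e₂(x̂ᵢ) = e₂(x) - xᵢ (e₁(x) - xᵢ)`. -/
theorem stmt4_general (k m : ℕ) (hk : 2 ≤ k) (x : Fin k → ℝ) :
    F k (m + 1) x - F k m x =
      - ∑ i : Fin k,
          deriv (fun t : ℝ =>
            ((((k : ℝ) - 1) * ((m : ℝ) + 1) + (e1 x - x i)) * t +
                (e2 x - x i * (e1 x - x i))) /
              (((k : ℝ) - 1) * ((m : ℝ) + 1) * (2 * (m : ℝ) + k)) *
              F k m (Function.update x i t)) (x i) := by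
  have hk' : (2 : ℝ) ≤ k := by exact_mod_cast hk
  have hD : ((k : ℝ) - 1) * ((m : ℝ) + 1) * (2 * (m : ℝ) + k) ≠ 0 := by
    have : (k : ℝ) - 1 ≠ 0 := by linarith
    positivity
  simp only [deriv_affine_mul_F_update]
  rw [← Finset.sum_mul, ← Finset.mul_sum, sum_wz_numerator, F_eq, F_eq]
  linear_combination (e2 x ^ m * Real.exp (-e1 x)) * div_mul_cancel₀ (Fcoeff k m) hD +
    (e2 x ^ (m + 1) * Real.exp (-e1 x)) * Fcoeff_succ hk m

/-- (WZ 2):  `F_k(m+1;x) - F_k(m;x) = -∑ᵢ ∂/∂xᵢ [ R(xᵢ; x̂ᵢ) F_k(m;x) ]`, where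
`R(u; v) = (((k-1)(m+1) + e₁(v)) u + e₂(v)) / ((k-1)(m+1)(2m+k))` and `x̂ᵢ` is `x` with
the `i`-th coordinate deleted, so that `e₁(x̂ᵢ) = e₁(x) - xᵢ` and
`e₂(x̂ᵢ) = e₂(x) - xᵢ (e₁(x) - xᵢ)`. -/
theorem stmt4 (k m : ℕ) (hk : 2 ≤ k) (x : Fin k → ℝ) (hx : ∀ i, 0 < x i) :
    F k (m + 1) x - F k m x =
      - ∑ i : Fin k,
          deriv (fun t : ℝ =>
            ((((k : ℝ) - 1) * ((m : ℝ) + 1) + (e1 x - x i)) * t +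
                (e2 x - x i * (e1 x - x i))) /
              (((k : ℝ) - 1) * ((m : ℝ) + 1) * (2 * (m : ℝ) + k)) *
              F k m (Function.update x i t)) (x i) :=
  stmt4_general k m hk x
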